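/- arXiv:2006.13069 — 5 statements merged into one kernel-verified Lean document; each statement's English description precedes it below -/
import Mathlib

section
/- Entropy dissipativity for the Fisher–KPP reaction term: let n ≥ 1 be a real parameter and consider f(ρ) = ρ(1−ρ) and s_n'(ρ) = log(ρ/(n−ρ)). Then f(ρ) s_n'(ρ) = ρ(1−ρ) log(ρ/(n−ρ)) ≤ 0 for all ρ ∈ (0,1) if and only if n ≥ 2. -/
/-- Entropy dissipativity for the Fisher–KPP reaction term: with `f(ρ) = ρ(1-ρ)` and
`s_n'(ρ) = log(ρ/(n-ρ))`, one has `f(ρ) s_n'(ρ) ≤ 0` for all `ρ ∈ (0,1)` iff `n ≥ 2`. -/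
theorem stmt5 (n : ℝ) (hn : 1 ≤ n) :
    (∀ ρ : ℝ, 0 < ρ → ρ < 1 → ρ * (1 - ρ) * Real.log (ρ / (n - ρ)) ≤ 0) ↔ 2 ≤ n := by
  constructor
  · intro h
    by_contra hlt
    push_neg at hlt
    set ρ : ℝ := (n / 2 + 1) / 2 with hρ
    have h1 : n / 2 < ρ := by rw [hρ]; nlinarith
    have h2 : ρ < 1 := by rw [hρ]; nlinarith
    have h0 : 0 < ρ := by rw [hρ]; nlinarith
    have hden : 0 < n - ρ := by nlinarith
    have hgt : 1 < ρ / (n - ρ) := by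
      rw [lt_div_iff₀ hden]; nlinarith
    have hlog : 0 < Real.log (ρ / (n - ρ)) := Real.log_pos hgt
    have := h ρ h0 h2
    nlinarith [mul_pos (mul_pos h0 (by linarith : (0:ℝ) < 1 - ρ)) hlog]
  · intro h2 ρ h0 h1
    have hden : 0 < n - ρ := by linarith
    have hle : ρ / (n - ρ) ≤ 1 := by
      rw [div_le_one hden]; linarith
    have hlog : Real.log (ρ / (n - ρ)) ≤ 0 := Real.log_nonpos (by positivity) hle
    exact mul_nonpos_of_nonneg_of_nonpos (by nlinarith) hlog
end

section
/- Kernel and image of the Maxwell–Stefan matrix: for every ρ ∈ ℝ^{N+1} with ρ_i > 0 for all i, the kernel of M(ρ) is exactly the one-dimensional span of ρ, and the image of M(ρ) is exactly the hyperplane {v ∈ ℝ^{N+1} : Σ_{i=1}^{N+1} v_i = 0}. In particular, the eigenvalue 0 of M(ρ) has multiplicity one. -/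
open Finset Matrix

/-- The Maxwell–Stefan matrix `M(ρ)`, with entries `M_{ij} = ρ_i/D_{ij}` for `i ≠ j` and
`M_{ii} = -Σ_{k ≠ i} ρ_k/D_{ik}`. -/
noncomputable def msM (N : ℕ) (D : Fin (N + 1) → Fin (N + 1) → ℝ) (ρ : Fin (N + 1) → ℝ) :
    Matrix (Fin (N + 1)) (Fin (N + 1)) ℝ :=
  Matrix.of fun i j =>
    if i = j then -∑ k ∈ Finset.univ.erase i, ρ k / D i k else ρ i / D i j

lemma msM_mulVec (N : ℕ) (D : Fin (N + 1) → Fin (N + 1) → ℝ) (ρ x : Fin (N + 1) → ℝ)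
    (i : Fin (N + 1)) :
    (msM N D ρ *ᵥ x) i = ∑ j ∈ Finset.univ.erase i, (ρ i * x j - ρ j * x i) / D i j := by
  simp only [msM, mulVec, dotProduct, of_apply]
  rw [← Finset.sum_erase_add _ _ (Finset.mem_univ i), if_pos rfl,
    Finset.sum_congr rfl (fun j hj => by
      rw [if_neg (Ne.symm (Finset.ne_of_mem_erase hj))])]
  rw [neg_mul, Finset.sum_mul, neg_eq_neg_one_mul, Finset.mul_sum, ← Finset.sum_add_distrib]
  exact Finset.sum_congr rfl fun j _ => by ring

lemma msM_colSum (N : ℕ) (D : Fin (N + 1) → Fin (N + 1) → ℝ)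
    (hDsymm : ∀ i j, D i j = D j i) (ρ : Fin (N + 1) → ℝ) (j : Fin (N + 1)) :
    ∑ i, msM N D ρ i j = 0 := by
  simp only [msM, of_apply]
  rw [← Finset.sum_erase_add _ _ (Finset.mem_univ j), if_pos rfl,
    Finset.sum_congr rfl (fun i hi => by
      rw [if_neg (Finset.ne_of_mem_erase hi)])]
  rw [Finset.sum_congr rfl (fun k hk => by rw [hDsymm k j])]
  ring

/-- Kernel and image of the Maxwell–Stefan matrix: for `ρ > 0` componentwise,
`Ker M(ρ) = span{ρ}`, `Im M(ρ) = {v : Σ_i v_i = 0}`, and the eigenvalue `0`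
has multiplicity one (the kernel is one-dimensional). -/
theorem stmt7 (N : ℕ) (hN : 1 ≤ N) (D : Fin (N + 1) → Fin (N + 1) → ℝ)
    (hDpos : ∀ i j, i ≠ j → 0 < D i j) (hDsymm : ∀ i j, D i j = D j i)
    (ρ : Fin (N + 1) → ℝ) (hρ : ∀ i, 0 < ρ i) :
    LinearMap.ker (msM N D ρ).mulVecLin = Submodule.span ℝ {ρ} ∧
    (∀ v : Fin (N + 1) → ℝ,
      v ∈ LinearMap.range (msM N D ρ).mulVecLin ↔ ∑ i, v i = 0) ∧
    Module.finrank ℝ (LinearMap.ker (msM N D ρ).mulVecLin) = 1 := by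
  have hρ0 : ρ ≠ 0 := fun h => absurd (congrFun h 0) (ne_of_gt (hρ 0))
  -- ρ is in the kernel
  have hker_ρ : (msM N D ρ).mulVecLin ρ = 0 := by
    funext i
    rw [mulVecLin_apply, msM_mulVec]
    simp only [Pi.zero_apply]
    exact Finset.sum_eq_zero fun j _ => by rw [mul_comm, sub_self, zero_div]
  -- kernel equals span ρ
  have hker : LinearMap.ker (msM N D ρ).mulVecLin = Submodule.span ℝ {ρ} := by
    apply le_antisymm
    · intro x hx
      rw [LinearMap.mem_ker] at hx
      obtain ⟨i0, -, hmax⟩ := Finset.exists_max_image Finset.univ (fun j => x j / ρ j)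
        ⟨0, Finset.mem_univ 0⟩
      have hrow : (0 : ℝ) = ∑ j ∈ Finset.univ.erase i0, (ρ i0 * x j - ρ j * x i0) / D i0 j := by
        rw [← msM_mulVec N D ρ x i0, ← mulVecLin_apply, hx]; rfl
      have hterm : ∀ j ∈ Finset.univ.erase i0, (ρ i0 * x j - ρ j * x i0) / D i0 j ≤ 0 := by
        intro j hj
        have hne : i0 ≠ j := Ne.symm (Finset.ne_of_mem_erase hj)
        apply div_nonpos_of_nonpos_of_nonneg _ (le_of_lt (hDpos i0 j hne))
        have h1 : x j / ρ j ≤ x i0 / ρ i0 := hmax j (Finset.mem_univ j)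
        rw [div_le_div_iff₀ (hρ j) (hρ i0)] at h1
        nlinarith
      have hzero : ∀ j ∈ Finset.univ.erase i0, (ρ i0 * x j - ρ j * x i0) / D i0 j = 0 := by
        rw [← Finset.sum_eq_zero_iff_of_nonpos hterm]
        exact hrow.symm
      have hxj : ∀ j, x j = (x i0 / ρ i0) * ρ j := by
        intro j
        by_cases hij : j = i0
        · subst hij
          rw [div_mul_cancel₀ _ (ne_of_gt (hρ _))]
        · have hj : j ∈ Finset.univ.erase i0 := Finset.mem_erase.mpr ⟨hij, Finset.mem_univ j⟩
          have := hzero j hj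
          have hD : D i0 j ≠ 0 := ne_of_gt (hDpos i0 j (Ne.symm hij))
          rw [div_eq_zero_iff] at this
          have hnum : ρ i0 * x j - ρ j * x i0 = 0 := this.resolve_right hD
          have hρi0 : ρ i0 ≠ 0 := ne_of_gt (hρ i0)
          field_simp
          nlinarith
      rw [Submodule.mem_span_singleton]
      exact ⟨x i0 / ρ i0, funext fun j => (hxj j).symm⟩
    · rw [Submodule.span_singleton_le_iff_mem, LinearMap.mem_ker]
      exact hker_ρ
  have hfr : Module.finrank ℝ (LinearMap.ker (msM N D ρ).mulVecLin) = 1 := by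
    rw [hker, finrank_span_singleton hρ0]
  refine ⟨hker, ?_, hfr⟩
  -- range
  let g : (Fin (N + 1) → ℝ) →ₗ[ℝ] ℝ :=
    { toFun := fun v => ∑ i, v i
      map_add' := fun u v => by simp [Finset.sum_add_distrib]
      map_smul' := fun c v => by simp [Finset.mul_sum] }
  have hgsurj : Function.Surjective g := by
    intro c
    refine ⟨fun _ => c / (N + 1), ?_⟩
    show ∑ _i : Fin (N + 1), c / (N + 1) = c
    rw [Finset.sum_const, Finset.card_univ, Fintype.card_fin, nsmul_eq_mul]
    have : ((N : ℝ) + 1) ≠ 0 := by positivity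
    push_cast
    field_simp
  have hfintop : Module.finrank ℝ (Fin (N + 1) → ℝ) = N + 1 := by
    simp [Module.finrank_pi]
  have hkerg : Module.finrank ℝ (LinearMap.ker g) = N := by
    have h1 := LinearMap.finrank_range_add_finrank_ker g
    rw [hfintop, LinearMap.range_eq_top.mpr hgsurj, finrank_top] at h1
    simp only [Module.finrank_self] at h1
    omega
  have hrangeM : Module.finrank ℝ (LinearMap.range (msM N D ρ).mulVecLin) = N := by
    have h1 := LinearMap.finrank_range_add_finrank_ker (msM N D ρ).mulVecLin
    rw [hfintop, hfr] at h1
    omega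
  have hle : LinearMap.range (msM N D ρ).mulVecLin ≤ LinearMap.ker g := by
    rintro v ⟨x, rfl⟩
    rw [LinearMap.mem_ker]
    show ∑ i, (msM N D ρ *ᵥ x) i = 0
    simp only [mulVec, dotProduct]
    rw [Finset.sum_comm]
    exact Finset.sum_eq_zero fun j _ => by
      rw [← Finset.sum_mul, msM_colSum N D hDsymm ρ j, zero_mul]
  have heq : LinearMap.range (msM N D ρ).mulVecLin = LinearMap.ker g :=
    Submodule.eq_of_le_of_finrank_eq hle (by rw [hrangeM, hkerg])
  intro v
  rw [heq, LinearMap.mem_ker]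
  rfl
end

section
/- Symmetrizability of the Maxwell–Stefan matrix: for every ρ ∈ ℝ^{N+1} with ρ_i > 0 for all i, setting R = diag(ρ_1^{1/2}, …, ρ_{N+1}^{1/2}), the matrix R^{-1} M(ρ) R is symmetric (its (i,j) entry equals ρ_i^{1/2} ρ_j^{1/2}/D_{ij} for i ≠ j). Consequently, all eigenvalues of M(ρ) are real. -/
open Finset Matrix

/-!
Conjugating by `R = diag(√ρ)` turns the off-diagonal entry `ρ_i / D_{ij}` into
`√ρ_i √ρ_j / D_{ij}`, which is symmetric in `i, j` because `D` is, while the diagonal is unchanged.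
So `M(ρ)` is similar to a real symmetric matrix, whose complexification is Hermitian and therefore
has real spectrum.
-/

namespace Matrix

variable {n : Type*} [Fintype n] [DecidableEq n]

theorem diagonal_inv_mul_mul_diagonal_apply {K : Type*} [Field K] {d : n → K}
    (hd : ∀ i, d i ≠ 0) (A : Matrix n n K) (i j : n) :
    ((diagonal d)⁻¹ * A * diagonal d) i j = (d i)⁻¹ * A i j * d j := by
  have hinv : (Ring.inverse d) i = (d i)⁻¹ :=
    eq_inv_of_mul_eq_one_left <| congr_fun
      (Ring.inverse_mul_cancel d (Pi.isUnit_iff.mpr fun i => (hd i).isUnit)) i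
  rw [inv_diagonal, mul_diagonal, diagonal_mul, hinv]

theorem spectrum_map_inv_mul_mul {R S : Type*} [CommRing R] [CommRing S] (f : R →+* S)
    {P : Matrix n n R} (hP : IsUnit P) (A : Matrix n n R) :
    spectrum S ((P⁻¹ * A * P).map f) = spectrum S (A.map f) := by
  obtain ⟨u, rfl⟩ := hP
  let v : (Matrix n n S)ˣ := Units.map f.mapMatrix.toMonoidHom u
  have hmap : ((u⁻¹ : (Matrix n n R)ˣ) * A * u : Matrix n n R).map f
      = (v⁻¹ : (Matrix n n S)ˣ) * A.map f * v := by
    simp [v, Matrix.map_mul]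
  rw [← coe_units_inv, hmap, spectrum.units_conjugate']

theorem IsSymm.im_eq_zero_of_mem_spectrum_map_ofReal {A : Matrix n n ℝ} (hA : A.IsSymm)
    {μ : ℂ} (hμ : μ ∈ spectrum ℂ (A.map Complex.ofReal)) : μ.im = 0 := by
  have hH : (A.map Complex.ofReal).IsHermitian :=
    (isHermitian_iff_isSymm.mpr hA).map _ fun x => (Complex.conj_ofReal x).symm
  rw [hH.spectrum_eq_image_range] at hμ
  obtain ⟨x, -, rfl⟩ := hμ
  exact Complex.ofReal_im x

end Matrix

theorem msM_apply_of_ne {N : ℕ} (D : Fin (N + 1) → Fin (N + 1) → ℝ) (ρ : Fin (N + 1) → ℝ)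
    {i j : Fin (N + 1)} (hij : i ≠ j) : msM N D ρ i j = ρ i / D i j := by
  simp [msM, hij]

theorem stmt8_general (N : ℕ) (D : Fin (N + 1) → Fin (N + 1) → ℝ)
    (hDsymm : ∀ i j, D i j = D j i)
    (ρ : Fin (N + 1) → ℝ) (hρ : ∀ i, 0 < ρ i) :
    ((Matrix.diagonal fun i => Real.sqrt (ρ i))⁻¹ * msM N D ρ
        * Matrix.diagonal fun i => Real.sqrt (ρ i)).IsSymm ∧
    (∀ i j, i ≠ j →
      ((Matrix.diagonal fun i => Real.sqrt (ρ i))⁻¹ * msM N D ρ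
          * Matrix.diagonal fun i => Real.sqrt (ρ i)) i j
        = Real.sqrt (ρ i) * Real.sqrt (ρ j) / D i j) ∧
    (∀ μ ∈ spectrum ℂ ((msM N D ρ).map (Complex.ofReal : ℝ → ℂ)), μ.im = 0) := by
  have hsqrt : ∀ i, Real.sqrt (ρ i) ≠ 0 := fun i => (Real.sqrt_pos.mpr (hρ i)).ne'
  have hoff : ∀ i j, i ≠ j →
      ((diagonal fun i => Real.sqrt (ρ i))⁻¹ * msM N D ρ * diagonal fun i => Real.sqrt (ρ i)) i j
        = Real.sqrt (ρ i) * Real.sqrt (ρ j) / D i j := by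
    intro i j hij
    have hcancel : (Real.sqrt (ρ i))⁻¹ * ρ i = Real.sqrt (ρ i) :=
      (inv_mul_eq_iff_eq_mul₀ (hsqrt i)).mpr (Real.mul_self_sqrt (hρ i).le).symm
    rw [diagonal_inv_mul_mul_diagonal_apply hsqrt, msM_apply_of_ne D ρ hij, ← mul_div_assoc,
      hcancel, div_mul_eq_mul_div]
  have hsymm : ((diagonal fun i => Real.sqrt (ρ i))⁻¹ * msM N D ρ
      * diagonal fun i => Real.sqrt (ρ i)).IsSymm := by
    refine IsSymm.ext fun i j => ?_
    rcases eq_or_ne i j with rfl | hij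
    · rfl
    · rw [hoff j i hij.symm, hoff i j hij, hDsymm, mul_comm]
  refine ⟨hsymm, hoff, fun μ hμ => hsymm.im_eq_zero_of_mem_spectrum_map_ofReal ?_⟩
  exact (spectrum_map_inv_mul_mul Complex.ofRealHom
    (isUnit_diagonal.mpr (Pi.isUnit_iff.mpr fun i => (hsqrt i).isUnit)) _).ge hμ

/-- Symmetrizability of the Maxwell–Stefan matrix: with `R = diag(√ρ_1, …, √ρ_{N+1})`,
the matrix `R⁻¹ M(ρ) R` is symmetric, with off-diagonal entries `√ρ_i √ρ_j / D_{ij}`;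
consequently all eigenvalues of `M(ρ)` are real. -/
theorem stmt8 (N : ℕ) (hN : 1 ≤ N) (D : Fin (N + 1) → Fin (N + 1) → ℝ)
    (hDpos : ∀ i j, i ≠ j → 0 < D i j) (hDsymm : ∀ i j, D i j = D j i)
    (ρ : Fin (N + 1) → ℝ) (hρ : ∀ i, 0 < ρ i) :
    ((Matrix.diagonal fun i => Real.sqrt (ρ i))⁻¹ * msM N D ρ
        * Matrix.diagonal fun i => Real.sqrt (ρ i)).IsSymm ∧
    (∀ i j, i ≠ j →
      ((Matrix.diagonal fun i => Real.sqrt (ρ i))⁻¹ * msM N D ρ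
          * Matrix.diagonal fun i => Real.sqrt (ρ i)) i j
        = Real.sqrt (ρ i) * Real.sqrt (ρ j) / D i j) ∧
    (∀ μ ∈ spectrum ℂ ((msM N D ρ).map (Complex.ofReal : ℝ → ℂ)), μ.im = 0) :=
  stmt8_general N D hDsymm ρ hρ
end

section
/- Invertibility of the reduced Maxwell–Stefan matrix: for every ρ ∈ D_N, the N×N matrix ℳ(ρ) is invertible (it has full rank). -/
open Finset Matrix

/-!
Extending `ρ` and `x` by the `(N+1)`-st components `1 - Σ ρ` and `-Σ x` turns `ℳ(ρ) x` into the
first `N` components of the full Maxwell–Stefan flux `F_i = Σ_j (ρ_i x_j - ρ_j x_i) / D_ij`. By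
symmetry of `D` the components of `F` sum to zero, so `ℳ(ρ) x = 0` forces `F = 0`. Writing
`x = ρ v`, the identity `Σ_i v_i F_i = -½ Σ_{i,j} ρ_i ρ_j (v_i - v_j)² / D_ij` then makes `v`
constant, and `Σ x = 0` makes that constant zero.
-/

/-- The set `D_N = {ρ ∈ ℝ^N : 0 < ρ_i < 1 for all i, Σ ρ_i < 1}`. -/
def Dset (N : ℕ) : Set (Fin N → ℝ) :=
  {ρ | (∀ i, 0 < ρ i ∧ ρ i < 1) ∧ ∑ i, ρ i < 1}

/-- The reduced Maxwell–Stefan matrix `ℳ(ρ)`, with entries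
`ℳ_{ij} = ρ_i/D_{ij} - ρ_i/D_{i(N+1)}` for `i ≠ j` and
`ℳ_{ii} = -Σ_{k ≠ i} ρ_k/D_{ik} - (1 - Σ_l ρ_l + ρ_i)/D_{i(N+1)}`. -/
noncomputable def redM (N : ℕ) (D : Fin (N + 1) → Fin (N + 1) → ℝ) (ρ : Fin N → ℝ) :
    Matrix (Fin N) (Fin N) ℝ :=
  Matrix.of fun i j =>
    if i = j then
      -(∑ k ∈ Finset.univ.erase i, ρ k / D i.castSucc k.castSucc)
        - (1 - ∑ l, ρ l + ρ i) / D i.castSucc (Fin.last N)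
    else ρ i / D i.castSucc j.castSucc - ρ i / D i.castSucc (Fin.last N)

section MaxwellStefan

variable {ι : Type*} [Fintype ι] {D : ι → ι → ℝ}

noncomputable def msFlux (D : ι → ι → ℝ) (ρ x : ι → ℝ) (i : ι) : ℝ :=
  ∑ j, (ρ i * x j - ρ j * x i) / D i j

theorem sum_msFlux_eq_zero (hDsymm : ∀ i j, D i j = D j i) (ρ x : ι → ℝ) :
    ∑ i, msFlux D ρ x i = 0 := by
  have hswap : ∑ i, msFlux D ρ x i = ∑ i, ∑ j, (ρ j * x i - ρ i * x j) / D j i :=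
    sum_comm
  have hanti : ∑ i, ∑ j, (ρ j * x i - ρ i * x j) / D j i = -∑ i, msFlux D ρ x i := by
    simp only [msFlux, ← sum_neg_distrib, hDsymm _ _, ← neg_div, neg_sub]
  linarith

theorem two_mul_sum_mul_msFlux (hDsymm : ∀ i j, D i j = D j i) (ρ v : ι → ℝ) :
    2 * ∑ i, v i * msFlux D ρ (ρ * v) i =
      -∑ i, ∑ j, ρ i * ρ j * (v i - v j) ^ 2 / D i j := by
  set S := ∑ i, v i * msFlux D ρ (ρ * v) i
  have hS : S = ∑ i, ∑ j, ρ i * ρ j * v i * (v j - v i) / D i j := by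
    refine sum_congr rfl fun i _ => ?_
    rw [msFlux, mul_sum]
    refine sum_congr rfl fun j _ => ?_
    simp only [Pi.mul_apply]
    ring
  have hS' : S = ∑ i, ∑ j, ρ i * ρ j * v j * (v i - v j) / D i j := by
    rw [hS, sum_comm]
    refine sum_congr rfl fun i _ => sum_congr rfl fun j _ => ?_
    rw [hDsymm j i]
    ring
  have hsym : ∑ i, ∑ j, ρ i * ρ j * v i * (v j - v i) / D i j
      + ∑ i, ∑ j, ρ i * ρ j * v j * (v i - v j) / D i j
      = -∑ i, ∑ j, ρ i * ρ j * (v i - v j) ^ 2 / D i j := by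
    simp only [← sum_add_distrib, ← sum_neg_distrib]
    exact sum_congr rfl fun i _ => sum_congr rfl fun j _ => by ring
  linear_combination hS + hS' + hsym

variable {ρ x : ι → ℝ}

theorem div_eq_div_of_msFlux_eq_zero (hDpos : ∀ i j, i ≠ j → 0 < D i j)
    (hDsymm : ∀ i j, D i j = D j i) (hρ : ∀ i, 0 < ρ i) (hF : ∀ i, msFlux D ρ x i = 0)
    (i j : ι) : x i / ρ i = x j / ρ j := by
  set v : ι → ℝ := fun k => x k / ρ k
  have hx : x = ρ * v := funext fun k => by simp [v, mul_div_cancel₀ _ (hρ k).ne']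
  have hterm_nonneg : ∀ k l, 0 ≤ ρ k * ρ l * (v k - v l) ^ 2 / D k l := by
    intro k l
    rcases eq_or_ne k l with rfl | hkl
    · simp
    · exact div_nonneg (mul_nonneg (mul_nonneg (hρ k).le (hρ l).le) (sq_nonneg _))
        (hDpos k l hkl).le
  have hsum : ∑ k, ∑ l, ρ k * ρ l * (v k - v l) ^ 2 / D k l = 0 := by
    have := two_mul_sum_mul_msFlux hDsymm ρ v
    rw [← hx] at this
    simp only [hF, mul_zero, sum_const_zero] at this
    linarith
  rcases eq_or_ne i j with rfl | hij
  · rfl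
  have hterm : ρ i * ρ j * (v i - v j) ^ 2 / D i j = 0 := by
    rw [Fintype.sum_eq_zero_iff_of_nonneg fun k => sum_nonneg fun l _ =>
      hterm_nonneg k l] at hsum
    have := (Fintype.sum_eq_zero_iff_of_nonneg (hterm_nonneg i)).1 (congrFun hsum i)
    exact congrFun this j
  have : (v i - v j) ^ 2 = 0 := by
    simpa [(hρ i).ne', (hρ j).ne', (hDpos i j hij).ne'] using hterm
  exact sub_eq_zero.1 (pow_eq_zero_iff two_ne_zero |>.1 this)

theorem eq_zero_of_msFlux_eq_zero (hDpos : ∀ i j, i ≠ j → 0 < D i j)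
    (hDsymm : ∀ i j, D i j = D j i) (hρ : ∀ i, 0 < ρ i) (hF : ∀ i, msFlux D ρ x i = 0)
    (hx : ∑ i, x i = 0) : x = 0 := by
  funext i
  have hsum : ∑ j, x j = x i / ρ i * ∑ j, ρ j := by
    rw [mul_sum]
    refine sum_congr rfl fun j _ => ?_
    rw [div_eq_div_of_msFlux_eq_zero hDpos hDsymm hρ hF i j, div_mul_cancel₀ _ (hρ j).ne']
  have hρsum : 0 < ∑ j, ρ j := sum_pos (fun j _ => hρ j) ⟨i, mem_univ i⟩
  rw [hx, eq_comm, mul_eq_zero] at hsum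
  simpa [(hρ i).ne', hρsum.ne'] using hsum

end MaxwellStefan

theorem redM_mulVec_apply (N : ℕ) (D : Fin (N + 1) → Fin (N + 1) → ℝ) (ρ x : Fin N → ℝ)
    (i : Fin N) :
    (redM N D ρ *ᵥ x) i =
      msFlux D (Fin.snoc ρ (1 - ∑ l, ρ l)) (Fin.snoc x (-∑ l, x l)) i.castSucc := by
  set L := Fin.last N
  have hoff : ∑ k ∈ univ.erase i, redM N D ρ i k * x k =
      ∑ k ∈ univ.erase i, ρ i * x k / D i.castSucc k.castSucc
        - ρ i / D i.castSucc L * ∑ k ∈ univ.erase i, x k := by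
    rw [mul_sum, ← sum_sub_distrib]
    refine sum_congr rfl fun k hk => ?_
    simp only [redM, of_apply, if_neg (ne_of_mem_erase hk).symm]
    ring
  have hflux : ∑ k ∈ univ.erase i, (ρ i * x k - ρ k * x i) / D i.castSucc k.castSucc =
      ∑ k ∈ univ.erase i, ρ i * x k / D i.castSucc k.castSucc
        - (∑ k ∈ univ.erase i, ρ k / D i.castSucc k.castSucc) * x i := by
    rw [sum_mul, ← sum_sub_distrib]
    exact sum_congr rfl fun k _ => by ring
  have hdiag : redM N D ρ i i = -(∑ k ∈ univ.erase i, ρ k / D i.castSucc k.castSucc)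
      - (1 - ∑ l, ρ l + ρ i) / D i.castSucc L := by
    simp [redM, L]
  rw [mulVec, dotProduct, msFlux, Fin.sum_univ_castSucc]
  simp only [Fin.snoc_castSucc, Fin.snoc_last]
  rw [← add_sum_erase _ _ (mem_univ i), ← add_sum_erase _ _ (mem_univ i), hoff, hflux, hdiag,
    ← add_sum_erase _ x (mem_univ i)]
  ring

theorem stmt9_general (N : ℕ) (D : Fin (N + 1) → Fin (N + 1) → ℝ)
    (hDpos : ∀ i j, i ≠ j → 0 < D i j) (hDsymm : ∀ i j, D i j = D j i)
    (ρ : Fin N → ℝ) (hρ : ρ ∈ Dset N) :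
    IsUnit (redM N D ρ) := by
  obtain ⟨hρ_bounds, hρ_sum⟩ := hρ
  set ρe : Fin (N + 1) → ℝ := Fin.snoc ρ (1 - ∑ l, ρ l)
  have hρe_pos : ∀ i, 0 < ρe i :=
    Fin.lastCases (by simpa [ρe] using hρ_sum) fun i => by simpa [ρe] using (hρ_bounds i).1
  rw [Matrix.isUnit_iff_isUnit_det, isUnit_iff_ne_zero, ne_eq,
    ← Matrix.exists_mulVec_eq_zero_iff]
  rintro ⟨x, hx_ne, hx_ker⟩
  set xe : Fin (N + 1) → ℝ := Fin.snoc x (-∑ l, x l)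
  have hF_castSucc : ∀ i : Fin N, msFlux D ρe xe i.castSucc = 0 := fun i => by
    rw [← redM_mulVec_apply, hx_ker, Pi.zero_apply]
  have hF : ∀ i, msFlux D ρe xe i = 0 := by
    refine Fin.lastCases ?_ hF_castSucc
    simpa [Fin.sum_univ_castSucc, hF_castSucc] using sum_msFlux_eq_zero hDsymm ρe xe
  have hxe : xe = 0 := eq_zero_of_msFlux_eq_zero hDpos hDsymm hρe_pos hF
    (by simp [xe, Fin.sum_univ_castSucc])
  exact hx_ne (funext fun i => by simpa [xe] using congrFun hxe i.castSucc)

/-- Invertibility of the reduced Maxwell–Stefan matrix: for every `ρ ∈ D_N`, the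
matrix `ℳ(ρ)` is invertible. -/
theorem stmt9 (N : ℕ) (hN : 1 ≤ N) (D : Fin (N + 1) → Fin (N + 1) → ℝ)
    (hDpos : ∀ i j, i ≠ j → 0 < D i j) (hDsymm : ∀ i j, D i j = D j i)
    (ρ : Fin N → ℝ) (hρ : ρ ∈ Dset N) :
    IsUnit (redM N D ρ) :=
  stmt9_general N D hDpos hDsymm ρ hρ
end

section
/- Entropy coercivity (H2a) for the Maxwell–Stefan system: there exists a constant γ > 0, depending only on N and on the coefficients D_{ij}, such that for every ρ ∈ D_N and every z ∈ ℝ^N, zᵀ H(ρ) A(ρ) z ≥ γ |z|², where A(ρ) := −ℳ(ρ)^{-1} (the reduced matrix ℳ(ρ) being invertible for ρ ∈ D_N) and H(ρ) is the Hessian of the entropy density s. -/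
open Finset Matrix

/-- The Hessian of the entropy density: `H(ρ)_{kℓ} = δ_{kℓ}/ρ_ℓ + 1/(1 - Σ ρ_j)`. -/
noncomputable def entropyHess (N : ℕ) (ρ : Fin N → ℝ) : Matrix (Fin N) (Fin N) ℝ :=
  Matrix.of fun k l => (if k = l then 1 / ρ l else 0) + 1 / (1 - ∑ j, ρ j)

namespace MS13

variable {N : ℕ}

noncomputable def xf (ρ : Fin N → ℝ) : Fin (N + 1) → ℝ :=
  Fin.snoc ρ (1 - ∑ i, ρ i)

noncomputable def uv (ρ w : Fin N → ℝ) (i : Fin (N + 1)) : ℝ :=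
  (Fin.snoc w (-∑ j, w j) : Fin (N + 1) → ℝ) i / xf ρ i

noncomputable def cf (D : Fin (N + 1) → Fin (N + 1) → ℝ) (ρ : Fin N → ℝ)
    (i j : Fin (N + 1)) : ℝ := xf ρ i * xf ρ j / D i j

noncomputable def Ff (D : Fin (N + 1) → Fin (N + 1) → ℝ) (ρ w : Fin N → ℝ)
    (i : Fin (N + 1)) : ℝ := ∑ j, cf D ρ i j * (uv ρ w j - uv ρ w i)

@[simp] lemma xf_castSucc (ρ : Fin N → ℝ) (i : Fin N) : xf ρ i.castSucc = ρ i := by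
  simp [xf]

@[simp] lemma xf_last (ρ : Fin N → ℝ) : xf ρ (Fin.last N) = 1 - ∑ i, ρ i := by
  simp [xf]

@[simp] lemma uv_castSucc (ρ w : Fin N → ℝ) (i : Fin N) :
    uv ρ w i.castSucc = w i / ρ i := by simp [uv]

@[simp] lemma uv_last (ρ w : Fin N → ℝ) :
    uv ρ w (Fin.last N) = (-∑ j, w j) / (1 - ∑ j, ρ j) := by simp [uv]

lemma xf_pos {ρ : Fin N → ℝ} (hρ : ρ ∈ Dset N) (i : Fin (N + 1)) : 0 < xf ρ i := by
  induction i using Fin.lastCases with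
  | last => simpa using sub_pos.mpr hρ.2
  | cast i => simpa using (hρ.1 i).1

lemma xf_sum (ρ : Fin N → ℝ) : ∑ i, xf ρ i = 1 := by
  rw [Fin.sum_univ_castSucc]; simp

lemma xf_le_one {ρ : Fin N → ℝ} (hρ : ρ ∈ Dset N) (i : Fin (N + 1)) : xf ρ i ≤ 1 := by
  rw [← xf_sum ρ]
  exact Finset.single_le_sum (fun j _ => (xf_pos hρ j).le) (Finset.mem_univ i)

lemma xu {ρ : Fin N → ℝ} (hρ : ρ ∈ Dset N) (w : Fin N → ℝ) (i : Fin (N + 1)) :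
    xf ρ i * uv ρ w i = (Fin.snoc w (-∑ j, w j) : Fin (N + 1) → ℝ) i := by
  rw [uv, mul_comm, div_mul_cancel₀ _ (xf_pos hρ i).ne']

lemma sum_xu {ρ : Fin N → ℝ} (hρ : ρ ∈ Dset N) (w : Fin N → ℝ) :
    ∑ i, xf ρ i * uv ρ w i = 0 := by
  simp_rw [xu hρ]
  rw [Fin.sum_univ_castSucc]
  simp

lemma cf_symm {D : Fin (N + 1) → Fin (N + 1) → ℝ}
    (hDsymm : ∀ i j, D i j = D j i) (ρ : Fin N → ℝ) (i j : Fin (N + 1)) :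
    cf D ρ i j = cf D ρ j i := by
  rw [cf, cf, hDsymm i j, mul_comm]

lemma sum_Ff {D : Fin (N + 1) → Fin (N + 1) → ℝ}
    (hDsymm : ∀ i j, D i j = D j i) (ρ w : Fin N → ℝ) :
    ∑ i, Ff D ρ w i = 0 := by
  have h : (∑ i, ∑ j, cf D ρ i j * uv ρ w j) = ∑ i, ∑ j, cf D ρ i j * uv ρ w i := by
    rw [Finset.sum_comm]
    exact Finset.sum_congr rfl fun i _ => Finset.sum_congr rfl fun j _ => by
      rw [cf_symm hDsymm]
  simp only [Ff, mul_sub, Finset.sum_sub_distrib]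
  rw [h, sub_self]

end MS13

namespace MS13

lemma div_helper (a b dd wi wj : ℝ) (ha : a ≠ 0) (hb : b ≠ 0) :
    a * b / dd * (wj / b - wi / a) = a / dd * wj - b / dd * wi := by
  have h1 : a * b / dd * (wj / b - wi / a)
      = (wj / b * b) * a / dd - (wi / a * a) * b / dd := by ring
  rw [h1, div_mul_cancel₀ _ hb, div_mul_cancel₀ _ ha]
  ring

lemma mulVec_redM {D : Fin (N + 1) → Fin (N + 1) → ℝ} {ρ : Fin N → ℝ}
    (hρ : ρ ∈ Dset N) (w : Fin N → ℝ) (i : Fin N) :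
    (redM N D ρ).mulVec w i = Ff D ρ w i.castSucc := by
  have hρpos : ∀ j, (0:ℝ) < ρ j := fun j => (hρ.1 j).1
  have hxL : (0:ℝ) < 1 - ∑ j, ρ j := sub_pos.mpr hρ.2
  have herase : ∑ k ∈ Finset.univ.erase i, ρ k / D i.castSucc k.castSucc
      = (∑ j : Fin N, ρ j / D i.castSucc j.castSucc) - ρ i / D i.castSucc i.castSucc := by
    have := Finset.sum_erase_add Finset.univ
      (fun k : Fin N => ρ k / D i.castSucc k.castSucc) (Finset.mem_univ i)
    linarith
  have hLHS : (redM N D ρ).mulVec w i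
      = (∑ j : Fin N, ρ i / D i.castSucc j.castSucc * w j)
        - ρ i / D i.castSucc (Fin.last N) * (∑ j, w j)
        + (-(∑ j : Fin N, ρ j / D i.castSucc j.castSucc)
            - (1 - ∑ j, ρ j) / D i.castSucc (Fin.last N)) * w i := by
    have e0 : (redM N D ρ).mulVec w i = ∑ j, redM N D ρ i j * w j := rfl
    have e1 : ∀ j : Fin N, redM N D ρ i j * w j
        = (ρ i / D i.castSucc j.castSucc - ρ i / D i.castSucc (Fin.last N)) * w j
          + (if i = j then
              ((-((∑ j : Fin N, ρ j / D i.castSucc j.castSucc)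
                  - ρ i / D i.castSucc i.castSucc)
                - (1 - (∑ j, ρ j) + ρ i) / D i.castSucc (Fin.last N))
                - (ρ i / D i.castSucc i.castSucc
                   - ρ i / D i.castSucc (Fin.last N))) * w i else 0) := by
      intro j
      by_cases h : i = j
      · subst h
        simp only [redM, Matrix.of_apply, if_pos rfl, herase, eq_self_iff_true, if_true]
        ring
      · simp only [redM, Matrix.of_apply, if_neg h, add_zero]
    rw [e0]
    simp only [e1]
    rw [Finset.sum_add_distrib, Finset.sum_ite_eq, if_pos (Finset.mem_univ i)]
    have e4 : ∑ j : Fin N,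
        (ρ i / D i.castSucc j.castSucc - ρ i / D i.castSucc (Fin.last N)) * w j
        = (∑ j : Fin N, ρ i / D i.castSucc j.castSucc * w j)
          - ρ i / D i.castSucc (Fin.last N) * (∑ j, w j) := by
      simp only [sub_mul, Finset.sum_sub_distrib, ← Finset.mul_sum]
    rw [e4]
    ring
  have hRHS : Ff D ρ w i.castSucc
      = (∑ j : Fin N, ρ i / D i.castSucc j.castSucc * w j)
        - ρ i / D i.castSucc (Fin.last N) * (∑ j, w j)
        + (-(∑ j : Fin N, ρ j / D i.castSucc j.castSucc)
            - (1 - ∑ j, ρ j) / D i.castSucc (Fin.last N)) * w i := by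
    rw [Ff, Fin.sum_univ_castSucc]
    have e2 : ∀ j : Fin N,
        cf D ρ i.castSucc j.castSucc * (uv ρ w j.castSucc - uv ρ w i.castSucc)
        = ρ i / D i.castSucc j.castSucc * w j
          - ρ j / D i.castSucc j.castSucc * w i := by
      intro j
      rw [cf, xf_castSucc, xf_castSucc, uv_castSucc, uv_castSucc]
      exact div_helper _ _ _ _ _ (hρpos i).ne' (hρpos j).ne'
    have e3 : cf D ρ i.castSucc (Fin.last N)
        * (uv ρ w (Fin.last N) - uv ρ w i.castSucc)
        = -(ρ i / D i.castSucc (Fin.last N) * (∑ j, w j))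
          - (1 - ∑ j, ρ j) / D i.castSucc (Fin.last N) * w i := by
      rw [cf, xf_last, xf_castSucc, uv_last, uv_castSucc]
      rw [div_helper _ _ _ _ _ (hρpos i).ne' hxL.ne']
      ring
    simp only [e2, e3]
    rw [Finset.sum_sub_distrib, ← Finset.sum_mul]
    ring
  rw [hLHS, hRHS]

end MS13

namespace MS13

lemma hess_mulVec {ρ : Fin N → ℝ} (w : Fin N → ℝ) (i : Fin N) :
    (entropyHess N ρ).mulVec w i = uv ρ w i.castSucc - uv ρ w (Fin.last N) := by
  have e : (entropyHess N ρ).mulVec w i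
      = ∑ l, ((if i = l then 1 / ρ l else 0) + 1 / (1 - ∑ j, ρ j)) * w l := rfl
  rw [e, uv_castSucc, uv_last]
  simp only [add_mul, Finset.sum_add_distrib, ite_mul, zero_mul, Finset.sum_ite_eq,
    Finset.mem_univ, if_true, ← Finset.mul_sum]
  ring

lemma symm_quad {ι : Type*} [Fintype ι] (c : ι → ι → ℝ) (hc : ∀ i j, c i j = c j i)
    (u : ι → ℝ) :
    ∑ i, ∑ j, c i j * (u i * (u i - u j)) = (1/2) * ∑ i, ∑ j, c i j * (u i - u j)^2 := by
  have hswap : ∑ i, ∑ j, c i j * (u i * (u i - u j))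
      = ∑ i, ∑ j, c i j * (u j * (u j - u i)) := by
    rw [Finset.sum_comm]
    exact Finset.sum_congr rfl fun i _ => Finset.sum_congr rfl fun j _ => by rw [hc]
  have h2 : ∑ i, ∑ j, (c i j * (u i * (u i - u j)) + c i j * (u j * (u j - u i)))
      = ∑ i, ∑ j, c i j * (u i - u j)^2 :=
    Finset.sum_congr rfl fun i _ => Finset.sum_congr rfl fun j _ => by ring
  simp only [Finset.sum_add_distrib] at h2
  linarith

/-- The key identity: for `z = -(ℳ w)`, the quadratic form `z ⬝ H w` equals `Q`. -/
lemma form_eq {D : Fin (N + 1) → Fin (N + 1) → ℝ} {ρ : Fin N → ℝ}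
    (hDsymm : ∀ i j, D i j = D j i) (hρ : ρ ∈ Dset N) (w : Fin N → ℝ) :
    ∑ i : Fin N, (-(redM N D ρ).mulVec w i) * (entropyHess N ρ).mulVec w i
      = (1/2) * ∑ i, ∑ j, cf D ρ i j * (uv ρ w i - uv ρ w j)^2 := by
  have step1 : ∑ i : Fin N, (-(redM N D ρ).mulVec w i) * (entropyHess N ρ).mulVec w i
      = -∑ i : Fin (N+1), Ff D ρ w i * (uv ρ w i - uv ρ w (Fin.last N)) := by
    rw [Fin.sum_univ_castSucc]
    simp only [sub_self, mul_zero, add_zero, neg_mul, ← Finset.sum_neg_distrib]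
    exact Finset.sum_congr rfl fun i _ => by rw [mulVec_redM hρ, hess_mulVec]
  rw [step1]
  have step2 : ∑ i : Fin (N+1), Ff D ρ w i * (uv ρ w i - uv ρ w (Fin.last N))
      = ∑ i : Fin (N+1), Ff D ρ w i * uv ρ w i := by
    simp only [mul_sub, Finset.sum_sub_distrib, ← Finset.sum_mul, sum_Ff hDsymm,
      zero_mul, sub_zero]
  rw [step2]
  have step3 : -∑ i : Fin (N+1), Ff D ρ w i * uv ρ w i
      = ∑ i, ∑ j, cf D ρ i j * (uv ρ w i * (uv ρ w i - uv ρ w j)) := by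
    rw [← Finset.sum_neg_distrib]
    refine Finset.sum_congr rfl fun i _ => ?_
    rw [Ff, Finset.sum_mul, ← Finset.sum_neg_distrib]
    exact Finset.sum_congr rfl fun j _ => by ring
  rw [step3, symm_quad _ (cf_symm hDsymm ρ)]

/-- Cauchy–Schwarz bound on each component of `Ff`. -/
lemma Ff_sq_le {D : Fin (N + 1) → Fin (N + 1) → ℝ} {ρ : Fin N → ℝ} {d : ℝ}
    (hd : 0 < d) (hdle : ∀ i j, i ≠ j → d ≤ D i j)
    (hρ : ρ ∈ Dset N) (w : Fin N → ℝ) (i : Fin (N + 1)) :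
    (Ff D ρ w i)^2 ≤ (1/d) * ∑ j, cf D ρ i j * (uv ρ w j - uv ρ w i)^2 := by
  have hxpos := xf_pos hρ
  have hs : ∀ j, Real.sqrt (xf ρ i * xf ρ j) * Real.sqrt (xf ρ i * xf ρ j)
      = xf ρ i * xf ρ j := fun j =>
    Real.mul_self_sqrt (mul_pos (hxpos i) (hxpos j)).le
  have hF : Ff D ρ w i = ∑ j, Real.sqrt (xf ρ i * xf ρ j)
      * (Real.sqrt (xf ρ i * xf ρ j) * (uv ρ w j - uv ρ w i) / D i j) := by
    rw [Ff]
    refine Finset.sum_congr rfl fun j _ => ?_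
    rw [cf]
    conv_rhs => rw [mul_div_assoc', ← mul_assoc, hs j]
    ring
  have hCS := Finset.sum_mul_sq_le_sq_mul_sq Finset.univ
    (fun j => Real.sqrt (xf ρ i * xf ρ j))
    (fun j => Real.sqrt (xf ρ i * xf ρ j) * (uv ρ w j - uv ρ w i) / D i j)
  rw [← hF] at hCS
  have hsq : ∀ j, Real.sqrt (xf ρ i * xf ρ j) ^ 2 = xf ρ i * xf ρ j := fun j =>
    Real.sq_sqrt (mul_pos (hxpos i) (hxpos j)).le
  have hfs : ∑ j, Real.sqrt (xf ρ i * xf ρ j) ^ 2 = xf ρ i := by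
    simp only [hsq, ← Finset.mul_sum, xf_sum, mul_one]
  rw [hfs] at hCS
  have hgs : ∑ j, (Real.sqrt (xf ρ i * xf ρ j) * (uv ρ w j - uv ρ w i) / D i j) ^ 2
      ≤ (1/d) * ∑ j, cf D ρ i j * (uv ρ w j - uv ρ w i)^2 := by
    rw [Finset.mul_sum]
    refine Finset.sum_le_sum fun j _ => ?_
    rcases eq_or_ne j i with rfl | hne
    · simp [sub_self]
    · have hD : d ≤ D i j := hdle i j (Ne.symm hne)
      have hDpos : 0 < D i j := lt_of_lt_of_le hd hD
      have e : (Real.sqrt (xf ρ i * xf ρ j) * (uv ρ w j - uv ρ w i) / D i j) ^ 2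
          = (xf ρ i * xf ρ j) * (uv ρ w j - uv ρ w i)^2 / (D i j ^ 2) := by
        rw [div_pow, mul_pow, hsq]
      rw [e]
      have hnum : (0:ℝ) ≤ (xf ρ i * xf ρ j) * (uv ρ w j - uv ρ w i)^2 :=
        mul_nonneg (mul_pos (hxpos i) (hxpos j)).le (sq_nonneg _)
      have hden : (xf ρ i * xf ρ j) * (uv ρ w j - uv ρ w i)^2 / (D i j ^ 2)
          ≤ (xf ρ i * xf ρ j) * (uv ρ w j - uv ρ w i)^2 / (d * D i j) :=
        div_le_div_of_nonneg_left hnum (mul_pos hd hDpos) (by nlinarith)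
      refine le_trans hden (le_of_eq ?_)
      rw [cf]
      ring
  calc (Ff D ρ w i)^2
      ≤ xf ρ i * ∑ j, (Real.sqrt (xf ρ i * xf ρ j) * (uv ρ w j - uv ρ w i) / D i j) ^ 2 :=
        hCS
    _ ≤ 1 * ((1/d) * ∑ j, cf D ρ i j * (uv ρ w j - uv ρ w i)^2) :=
        mul_le_mul (xf_le_one hρ i) hgs
          (Finset.sum_nonneg fun j _ => sq_nonneg _) zero_le_one
    _ = (1/d) * ∑ j, cf D ρ i j * (uv ρ w j - uv ρ w i)^2 := one_mul _

lemma cf_sq_nonneg {D : Fin (N + 1) → Fin (N + 1) → ℝ} {ρ : Fin N → ℝ}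
    (hDpos : ∀ i j, i ≠ j → 0 < D i j) (hρ : ρ ∈ Dset N) (w : Fin N → ℝ)
    (i j : Fin (N + 1)) : 0 ≤ cf D ρ i j * (uv ρ w i - uv ρ w j)^2 := by
  rcases eq_or_ne i j with rfl | hne
  · simp
  · exact mul_nonneg (div_nonneg
      (mul_pos (xf_pos hρ i) (xf_pos hρ j)).le (hDpos i j hne).le) (sq_nonneg _)

lemma mulVec_injective {D : Fin (N + 1) → Fin (N + 1) → ℝ} {ρ : Fin N → ℝ}
    (hDpos : ∀ i j, i ≠ j → 0 < D i j) (hDsymm : ∀ i j, D i j = D j i)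
    (hρ : ρ ∈ Dset N) : Function.Injective ((redM N D ρ).mulVec) := by
  have hρpos : ∀ j, (0:ℝ) < ρ j := fun j => (hρ.1 j).1
  have hxpos := xf_pos hρ
  have key : ∀ w, (redM N D ρ).mulVec w = 0 → w = 0 := by
    intro w hw
    have hQ : (1/2) * ∑ i, ∑ j, cf D ρ i j * (uv ρ w i - uv ρ w j)^2 = 0 := by
      rw [← form_eq hDsymm hρ w]
      simp [hw]
    have houter : ∑ i, ∑ j, cf D ρ i j * (uv ρ w i - uv ρ w j)^2 = 0 := by linarith
    have hz : ∀ i ∈ Finset.univ, ∀ j ∈ (Finset.univ : Finset (Fin (N+1))),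
        cf D ρ i j * (uv ρ w i - uv ρ w j)^2 = 0 := by
      intro i hi j hj
      have h1 := (Finset.sum_eq_zero_iff_of_nonneg
        (fun i _ => Finset.sum_nonneg fun j _ => cf_sq_nonneg hDpos hρ w i j)).mp
        houter i hi
      exact (Finset.sum_eq_zero_iff_of_nonneg
        (fun j _ => cf_sq_nonneg hDpos hρ w i j)).mp h1 j hj
    have huL : ∀ i : Fin N, uv ρ w i.castSucc = uv ρ w (Fin.last N) := by
      intro i
      have hij : i.castSucc ≠ Fin.last N := (Fin.castSucc_lt_last i).ne
      have h0 := hz i.castSucc (Finset.mem_univ _) (Fin.last N) (Finset.mem_univ _)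
      have hcpos : 0 < cf D ρ i.castSucc (Fin.last N) :=
        div_pos (mul_pos (hxpos _) (hxpos _)) (hDpos _ _ hij)
      have h2 := (mul_eq_zero.mp h0).resolve_left hcpos.ne'
      have h3 : uv ρ w i.castSucc - uv ρ w (Fin.last N) = 0 :=
        pow_eq_zero_iff (two_ne_zero) |>.mp h2
      linarith
    have hL0 : uv ρ w (Fin.last N) = 0 := by
      have h0 := sum_xu hρ w
      have hsum : ∑ i, xf ρ i * uv ρ w i = (∑ i, xf ρ i) * uv ρ w (Fin.last N) := by
        rw [Finset.sum_mul]
        refine Finset.sum_congr rfl fun i _ => ?_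
        induction i using Fin.lastCases with
        | last => rfl
        | cast i => rw [huL i]
      rw [hsum, xf_sum, one_mul] at h0
      exact h0
    funext i
    have hwi : ρ i * uv ρ w i.castSucc = w i := by
      rw [uv_castSucc, mul_comm, div_mul_cancel₀ _ (hρpos i).ne']
    rw [Pi.zero_apply, ← hwi, huL i, hL0, mul_zero]
  intro a b hab
  have h1 : (redM N D ρ).mulVec (a - b) = 0 := by
    rw [Matrix.mulVec_sub, hab, sub_self]
  exact sub_eq_zero.mp (key _ h1)

end MS13

/-- Entropy coercivity (H2a) for the Maxwell–Stefan system: there is `γ > 0` such that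
`zᵀ H(ρ) A(ρ) z ≥ γ |z|²` for all `ρ ∈ D_N` and `z ∈ ℝ^N`, where `A(ρ) = -ℳ(ρ)⁻¹`. -/
theorem stmt13 (N : ℕ) (hN : 1 ≤ N) (D : Fin (N + 1) → Fin (N + 1) → ℝ)
    (hDpos : ∀ i j, i ≠ j → 0 < D i j) (hDsymm : ∀ i j, D i j = D j i) :
    ∃ γ : ℝ, 0 < γ ∧ ∀ ρ ∈ Dset N, ∀ z : Fin N → ℝ,
      γ * ∑ i, z i ^ 2 ≤ z ⬝ᵥ (entropyHess N ρ * -(redM N D ρ)⁻¹).mulVec z := by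
  classical
  open MS13 in
  set P : Finset (Fin (N+1) × Fin (N+1)) :=
    Finset.univ.filter (fun p => p.1 ≠ p.2) with hP
  have h0L : (0 : Fin (N+1)) ≠ Fin.last N := by
    intro h
    have := congrArg Fin.val h
    simp [Fin.val_last] at this
    omega
  have hPne : P.Nonempty := ⟨⟨0, Fin.last N⟩, by simp [hP, h0L]⟩
  set d : ℝ := P.inf' hPne fun p => D p.1 p.2 with hd_def
  have hd : 0 < d := by
    rw [hd_def, Finset.lt_inf'_iff]
    intro p hp
    exact hDpos p.1 p.2 (by simpa [hP] using hp)
  have hdle : ∀ i j, i ≠ j → d ≤ D i j := by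
    intro i j hij
    have hmem : (⟨i, j⟩ : Fin (N+1) × Fin (N+1)) ∈ P := by
      rw [hP]; exact Finset.mem_filter.mpr ⟨Finset.mem_univ _, hij⟩
    exact Finset.inf'_le (fun p => D p.1 p.2) hmem
  refine ⟨d/2, by positivity, ?_⟩
  intro ρ hρ z
  have hinj := MS13.mulVec_injective hDpos hDsymm hρ
  have hU : IsUnit (redM N D ρ) := Matrix.mulVec_injective_iff_isUnit.mp hinj
  have hdet : IsUnit (redM N D ρ).det := (Matrix.isUnit_iff_isUnit_det _).mp hU
  set w := (-(redM N D ρ)⁻¹).mulVec z with hwdef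
  have hzw : (redM N D ρ).mulVec w = -z := by
    rw [hwdef, Matrix.neg_mulVec, Matrix.mulVec_neg, Matrix.mulVec_mulVec,
      Matrix.mul_nonsing_inv _ hdet, Matrix.one_mulVec]
  have hz : ∀ i, z i = -((redM N D ρ).mulVec w i) := by
    intro i
    have := congrFun hzw i
    simp only [Pi.neg_apply] at this
    linarith
  have hform : z ⬝ᵥ (entropyHess N ρ * -(redM N D ρ)⁻¹).mulVec z
      = ∑ i, (-(redM N D ρ).mulVec w i) * (entropyHess N ρ).mulVec w i := by
    rw [← Matrix.mulVec_mulVec, ← hwdef]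
    have e : z ⬝ᵥ (entropyHess N ρ).mulVec w
        = ∑ i, z i * (entropyHess N ρ).mulVec w i := rfl
    rw [e]
    exact Finset.sum_congr rfl fun i _ => by rw [hz i]
  rw [hform, MS13.form_eq hDsymm hρ w]
  have hbound : ∑ i, z i ^ 2
      ≤ (1/d) * ∑ i, ∑ j, cf D ρ i j * (uv ρ w i - uv ρ w j)^2 := by
    calc ∑ i : Fin N, z i ^ 2 = ∑ i : Fin N, (Ff D ρ w i.castSucc)^2 :=
          Finset.sum_congr rfl fun i _ => by
            rw [hz i, MS13.mulVec_redM hρ w i]; ring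
      _ ≤ ∑ i : Fin (N+1), (Ff D ρ w i)^2 := by
          rw [Fin.sum_univ_castSucc]
          nlinarith [sq_nonneg (Ff D ρ w (Fin.last N))]
      _ ≤ ∑ i : Fin (N+1), (1/d) * ∑ j, cf D ρ i j * (uv ρ w j - uv ρ w i)^2 :=
          Finset.sum_le_sum fun i _ => MS13.Ff_sq_le hd hdle hρ w i
      _ = (1/d) * ∑ i, ∑ j, cf D ρ i j * (uv ρ w i - uv ρ w j)^2 := by
          rw [← Finset.mul_sum]
          congr 1
          exact Finset.sum_congr rfl fun i _ => Finset.sum_congr rfl fun j _ => by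
            ring
  have hQnn : 0 ≤ ∑ i, ∑ j, cf D ρ i j * (uv ρ w i - uv ρ w j)^2 :=
    Finset.sum_nonneg fun i _ => Finset.sum_nonneg fun j _ =>
      MS13.cf_sq_nonneg hDpos hρ w i j
  calc d/2 * ∑ i, z i ^ 2
      ≤ d/2 * ((1/d) * ∑ i, ∑ j, cf D ρ i j * (uv ρ w i - uv ρ w j)^2) :=
        mul_le_mul_of_nonneg_left hbound (by positivity)
    _ = (1/2) * ∑ i, ∑ j, cf D ρ i j * (uv ρ w i - uv ρ w j)^2 := by
        field_simp
end
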